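/- arXiv:2206.15020 — 2 statements merged into one kernel-verified Lean document; each statement's English description precedes it below -/
import Mathlib

section
/- Abstract version of the demon Green's function: let G₀ : ℝ → ℝ → ℂ, and let P₁, P₂ : ℝ → ℂ, Q₁, Q₂ : ℂ be given with 1 + Q₂ ≠ 0. Set R₁(x') = P₁(x')/(1+Q₂), Q₃ = Q₁/(1+Q₂), and suppose D := 1 + P₂(0) − G₀(0,0)·Q₃ ≠ 0. Then the function G_p(x,x') := G₀(x,x') + G₀(x,0)G₀(0,x')Q₃/D − G₀(x,0)R₁(x')(1+P₂(0))/D − P₂(x)(G₀(0,x') − G₀(0,0)R₁(x'))/D satisfies the functional equation G_p(x,x') = G₀(x,x') − P₂(x)G_p(0,x') − G₀(x,0)·(P₁(x') − Q₁·G_p(0,x'))/(1+Q₂) for all x, x'. -/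
/-- Abstract demon Green's function: the closed formula (eq. (24)) satisfies the
functional equation `G_p(x,x') = G₀(x,x') − P₂(x)G_p(0,x') − G₀(x,0)(P₁(x') − Q₁G_p(0,x'))/(1+Q₂)`. -/
theorem demon_green_functional_eq (G₀ : ℝ → ℝ → ℂ) (P₁ P₂ : ℝ → ℂ) (Q₁ Q₂ : ℂ)
    (hQ₂ : 1 + Q₂ ≠ 0)
    (hD : 1 + P₂ 0 - G₀ 0 0 * (Q₁ / (1 + Q₂)) ≠ 0) :
    ∀ x x',
      (fun x x' =>
        G₀ x x'
          + G₀ x 0 * G₀ 0 x' * (Q₁ / (1 + Q₂)) / (1 + P₂ 0 - G₀ 0 0 * (Q₁ / (1 + Q₂)))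
          - G₀ x 0 * (P₁ x' / (1 + Q₂)) * (1 + P₂ 0) / (1 + P₂ 0 - G₀ 0 0 * (Q₁ / (1 + Q₂)))
          - P₂ x * (G₀ 0 x' - G₀ 0 0 * (P₁ x' / (1 + Q₂)))
              / (1 + P₂ 0 - G₀ 0 0 * (Q₁ / (1 + Q₂)))) x x'
      = G₀ x x'
          - P₂ x * ((fun x x' =>
              G₀ x x'
                + G₀ x 0 * G₀ 0 x' * (Q₁ / (1 + Q₂)) / (1 + P₂ 0 - G₀ 0 0 * (Q₁ / (1 + Q₂)))
                - G₀ x 0 * (P₁ x' / (1 + Q₂)) * (1 + P₂ 0) / (1 + P₂ 0 - G₀ 0 0 * (Q₁ / (1 + Q₂)))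
                - P₂ x * (G₀ 0 x' - G₀ 0 0 * (P₁ x' / (1 + Q₂)))
                    / (1 + P₂ 0 - G₀ 0 0 * (Q₁ / (1 + Q₂)))) 0 x')
          - G₀ x 0 * (P₁ x' - Q₁ * ((fun x x' =>
              G₀ x x'
                + G₀ x 0 * G₀ 0 x' * (Q₁ / (1 + Q₂)) / (1 + P₂ 0 - G₀ 0 0 * (Q₁ / (1 + Q₂)))
                - G₀ x 0 * (P₁ x' / (1 + Q₂)) * (1 + P₂ 0) / (1 + P₂ 0 - G₀ 0 0 * (Q₁ / (1 + Q₂)))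
                - P₂ x * (G₀ 0 x' - G₀ 0 0 * (P₁ x' / (1 + Q₂)))
                    / (1 + P₂ 0 - G₀ 0 0 * (Q₁ / (1 + Q₂)))) 0 x')) / (1 + Q₂) := by
  have hE : 1 - Q₁ * G₀ 0 0 + P₂ 0 + P₂ 0 * Q₂ + Q₂ ≠ 0 := fun h =>
    mul_ne_zero hQ₂ hD (by field_simp; linear_combination h)
  intro x x'
  simp only []
  field_simp
  have hinv : (1 - Q₁ * G₀ 0 0 + P₂ 0 + P₂ 0 * Q₂ + Q₂)⁻¹ * (1 - Q₁ * G₀ 0 0 + P₂ 0 + P₂ 0 * Q₂ + Q₂) = 1 := inv_mul_cancel₀ hE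
  linear_combination (-(G₀ x 0 * P₁ x' - G₀ x 0 * G₀ 0 x' * Q₁ + G₀ 0 x' * P₂ x * (1 + Q₂))) * hinv
end

section
/- The sine integral Si(x) = ∫_0^x sin(t)/t dt tends to π/2 as x → +∞. -/
/-! For `t > 0`, `sin t / t = ∫_0^∞ sin t · e^{-ts} ds`. Exchanging the integrals (Fubini) and
integrating `sin t · e^{-ts}` in `t` explicitly gives
`Si X = ∫_0^∞ (1 - e^{-Xs} (cos X + s sin X)) / (1 + s²) ds = π/2 - siRemainder X`,
and since `|cos X + s sin X| ≤ 1 + s²`, `|siRemainder X| ≤ ∫_0^∞ e^{-Xs} ds = 1/X`. -/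

open Real Filter

/-- The sine integral `Si(x) = ∫_0^x sin t / t dt`. -/
noncomputable def Si (x : ℝ) : ℝ := ∫ t in (0 : ℝ)..x, Real.sin t / t

open MeasureTheory Set Function

lemma integral_Ioi_exp_neg_mul {t : ℝ} (ht : 0 < t) :
    ∫ s in Ioi (0 : ℝ), exp (-t * s) = t⁻¹ := by
  rw [integral_exp_mul_Ioi (neg_neg_of_pos ht)]
  simp

lemma sin_div_eq_integral_Ioi {t : ℝ} (ht : 0 < t) :
    sin t / t = ∫ s in Ioi (0 : ℝ), sin t * exp (-t * s) := by
  rw [integral_const_mul, integral_Ioi_exp_neg_mul ht, div_eq_mul_inv]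

/-- Integrating `|sin t| e^{-ts}` in `s` first leaves `|sinc t| ≤ 1`. -/
lemma integrable_sin_mul_exp_neg_mul_prod (X : ℝ) :
    Integrable (uncurry fun s t => sin t * exp (-t * s))
      ((volume.restrict (Ioi 0)).prod (volume.restrict (Ioc 0 X))) := by
  have hcont : Continuous (uncurry fun s t : ℝ => sin t * exp (-t * s)) := by fun_prop
  rw [integrable_prod_iff' hcont.aestronglyMeasurable]
  have hpos : ∀ᵐ t ∂volume.restrict (Ioc (0 : ℝ) X), 0 < t :=
    (ae_restrict_mem measurableSet_Ioc).mono fun t ht => ht.1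
  refine ⟨hpos.mono fun t ht => ?_, ?_⟩
  · exact (integrableOn_exp_mul_Ioi (neg_lt_zero.2 ht) 0).const_mul (sin t)
  · have h_inner : (fun t => ∫ s in Ioi 0, ‖sin t * exp (-t * s)‖)
        =ᵐ[volume.restrict (Ioc 0 X)] fun t => |sinc t| := by
      filter_upwards [hpos] with t ht
      simp only [norm_mul, norm_of_nonneg (exp_nonneg _)]
      rw [integral_const_mul, integral_Ioi_exp_neg_mul ht, sinc_of_ne_zero ht.ne', abs_div,
        abs_of_pos ht, div_eq_mul_inv, norm_eq_abs]
    exact continuous_sinc.abs.integrableOn_Ioc.congr h_inner.symm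

lemma hasDerivAt_exp_mul_cos_add_mul_sin (s t : ℝ) :
    HasDerivAt (fun t => -(exp (-t * s) * (cos t + s * sin t)) / (1 + s ^ 2))
      (sin t * exp (-t * s)) t := by
  have he : HasDerivAt (fun t => exp (-t * s)) (-s * exp (-t * s)) t := by
    simpa [mul_comm] using ((hasDerivAt_neg t).mul_const s).exp
  have hc : HasDerivAt (fun t => cos t + s * sin t) (-sin t + s * cos t) t :=
    (hasDerivAt_cos t).add ((hasDerivAt_sin t).const_mul s)
  refine (((he.mul hc).neg).div_const (1 + s ^ 2)).congr_deriv ?_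
  field_simp
  ring

lemma integral_sin_mul_exp_neg_mul (s X : ℝ) :
    ∫ t in (0 : ℝ)..X, sin t * exp (-t * s)
      = (1 + s ^ 2)⁻¹ - exp (-X * s) * (cos X + s * sin X) / (1 + s ^ 2) := by
  rw [intervalIntegral.integral_eq_sub_of_hasDerivAt
    (fun t _ => hasDerivAt_exp_mul_cos_add_mul_sin s t)
    ((by fun_prop : Continuous _).intervalIntegrable 0 X)]
  simp only [neg_zero, zero_mul, exp_zero, cos_zero, sin_zero, mul_zero, add_zero, one_mul]
  ring

lemma abs_cos_add_mul_sin_le (s X : ℝ) : |cos X + s * sin X| ≤ 1 + s ^ 2 := by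
  refine abs_le_of_sq_le_sq ?_ (by positivity)
  nlinarith [sq_nonneg (s * cos X - sin X), sin_sq_add_cos_sq X, sq_nonneg s]

lemma abs_exp_mul_cos_add_mul_sin_div_le (s X : ℝ) :
    |exp (-X * s) * (cos X + s * sin X) / (1 + s ^ 2)| ≤ exp (-X * s) := by
  rw [abs_div, abs_mul, abs_of_pos (exp_pos _), abs_of_pos (by positivity : (0 : ℝ) < 1 + s ^ 2),
    div_le_iff₀ (by positivity)]
  exact mul_le_mul_of_nonneg_left (abs_cos_add_mul_sin_le s X) (exp_pos _).le

noncomputable def siRemainder (X : ℝ) : ℝ :=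
  ∫ s in Ioi 0, exp (-X * s) * (cos X + s * sin X) / (1 + s ^ 2)

lemma integrableOn_siRemainder_integrand {X : ℝ} (hX : 0 < X) :
    IntegrableOn (fun s => exp (-X * s) * (cos X + s * sin X) / (1 + s ^ 2)) (Ioi 0) := by
  have hcont : Continuous fun s => exp (-X * s) * (cos X + s * sin X) / (1 + s ^ 2) :=
    Continuous.div (by fun_prop) (by fun_prop) fun s => by positivity
  refine (integrableOn_exp_mul_Ioi (neg_lt_zero.2 hX) 0).mono' hcont.aestronglyMeasurable ?_
  exact ae_of_all _ fun s => abs_exp_mul_cos_add_mul_sin_div_le s X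

lemma abs_siRemainder_le {X : ℝ} (hX : 0 < X) : |siRemainder X| ≤ X⁻¹ := by
  rw [siRemainder, ← norm_eq_abs, ← integral_Ioi_exp_neg_mul hX]
  refine norm_integral_le_of_norm_le (integrableOn_exp_mul_Ioi (neg_lt_zero.2 hX) 0)
    (ae_of_all _ fun s => ?_)
  exact abs_exp_mul_cos_add_mul_sin_div_le s X

lemma Si_eq_pi_div_two_sub_siRemainder {X : ℝ} (hX : 0 < X) :
    Si X = π / 2 - siRemainder X := by
  calc Si X = ∫ t in Ioc 0 X, ∫ s in Ioi 0, sin t * exp (-t * s) := by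
        rw [Si, intervalIntegral.integral_of_le hX.le]
        exact setIntegral_congr_fun measurableSet_Ioc fun t ht => sin_div_eq_integral_Ioi ht.1
    _ = ∫ s in Ioi 0, ∫ t in Ioc 0 X, sin t * exp (-t * s) :=
        (integral_integral_swap (integrable_sin_mul_exp_neg_mul_prod X)).symm
    _ = ∫ s in Ioi 0, ((1 + s ^ 2)⁻¹ - exp (-X * s) * (cos X + s * sin X) / (1 + s ^ 2)) := by
        congr 1 with s
        rw [← intervalIntegral.integral_of_le hX.le, integral_sin_mul_exp_neg_mul]
    _ = π / 2 - siRemainder X := by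
        rw [integral_sub integrable_inv_one_add_sq.integrableOn
          (integrableOn_siRemainder_integrand hX), integral_Ioi_inv_one_add_sq, arctan_zero,
          sub_zero, siRemainder]

/-- `Si(x) → π/2` as `x → +∞`. -/
theorem si_tendsto_pi_div_two : Tendsto Si atTop (nhds (π / 2)) := by
  have h_remainder : Tendsto siRemainder atTop (nhds 0) := by
    refine squeeze_zero_norm' ?_ tendsto_inv_atTop_zero
    filter_upwards [eventually_gt_atTop 0] with X hX
    exact abs_siRemainder_le hX
  have h_eq : (fun X => π / 2 - siRemainder X) =ᶠ[atTop] Si := by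
    filter_upwards [eventually_gt_atTop 0] with X hX
    exact (Si_eq_pi_div_two_sub_siRemainder hX).symm
  simpa using (tendsto_const_nhds.sub h_remainder).congr' h_eq
end
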